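/- Let K be a field of characteristic p > 0 and let n ≥ 3 be an integer with n ≡ 2 (mod 3) and p ∤ n² − n + 1. If (a,b,c) ∈ K³ is a nonzero triple with a·b^n + b·c^n + a^n·c = 0, then there is no λ ∈ K with (b, c, a) = (λa, λb, λc); that is, the automorphism μ : (X:Y:Z) ↦ (Y:Z:X) of the Hurwitz curve H_n has no fixed points on H_n. -/

import Mathlib

/-! A fixed point of `μ` is `(a : λa : λ²a)` with `a ≠ 0` and `λ³ = 1`. Since `n ≡ 2 (mod 3)`,
each of the three monomials of the Hurwitz polynomial takes the value `λ² aⁿ⁺¹` there, so the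
curve equation reads `3 λ² aⁿ⁺¹ = 0`. Hence `3 = 0` in `K`, i.e. `p ∣ 3`, while
`3 ∣ n² − n + 1` for `n ≡ 2 (mod 3)`. -/

lemma three_dvd_sq_sub_add_one_of_mod_three_eq_two {n : ℕ} (hn : n % 3 = 2) :
    3 ∣ n ^ 2 - n + 1 := by
  obtain ⟨k, rfl⟩ : ∃ k, n = 3 * k + 2 := ⟨n / 3, by omega⟩
  have h : (3 * k + 2) ^ 2 = 9 * k ^ 2 + 12 * k + 4 := by ring
  omega

lemma pow_eq_sq_of_pow_three_eq_one {M : Type*} [Monoid M] {x : M} (hx : x ^ 3 = 1) {n : ℕ}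
    (hn : n % 3 = 2) : x ^ n = x ^ 2 := by
  rw [← Nat.div_add_mod n 3, hn, pow_add, pow_mul, hx, one_pow, one_mul]

lemma pow_three_eq_one_of_cyclic_fixed {R : Type*} [CommRing R] [IsDomain R] {a b c lam : R}
    (ha : a ≠ 0) (hb : b = lam * a) (hc : c = lam * b) (ha' : a = lam * c) : lam ^ 3 = 1 := by
  refine mul_right_cancel₀ ha ?_
  calc lam ^ 3 * a = lam * c := by rw [hc, hb]; ring
    _ = 1 * a := by rw [← ha', one_mul]

lemma hurwitz_eval_cyclic_orbit {R : Type*} [CommRing R] {lam : R} (hlam : lam ^ 3 = 1)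
    {n : ℕ} (hn : n % 3 = 2) (a : R) :
    a * (lam * a) ^ n + lam * a * (lam ^ 2 * a) ^ n + a ^ n * (lam ^ 2 * a)
      = 3 * lam ^ 2 * a ^ (n + 1) := by
  have hdouble : (2 * n + 1) % 3 = 2 := by omega
  have h₁ := pow_eq_sq_of_pow_three_eq_one hlam hn
  have h₂ := pow_eq_sq_of_pow_three_eq_one hlam hdouble
  calc a * (lam * a) ^ n + lam * a * (lam ^ 2 * a) ^ n + a ^ n * (lam ^ 2 * a)
      = (lam ^ n + lam ^ (2 * n + 1) + lam ^ 2) * a ^ (n + 1) := by ring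
    _ = 3 * lam ^ 2 * a ^ (n + 1) := by rw [h₁, h₂]; ring

theorem hurwitz_mu_no_fixed_points_general (K : Type*) [Field K]
    (p : ℕ) [CharP K p]
    (n : ℕ) (hn3 : n % 3 = 2) (hpn : ¬ p ∣ (n ^ 2 - n + 1))
    (a b c : K) (habc : ¬(a = 0 ∧ b = 0 ∧ c = 0))
    (hcurve : a * b ^ n + b * c ^ n + a ^ n * c = 0) :
    ¬ ∃ lam : K, b = lam * a ∧ c = lam * b ∧ a = lam * c := by
  rintro ⟨lam, hb, hc, ha⟩
  have ha0 : a ≠ 0 := by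
    rintro rfl
    exact habc ⟨rfl, by simp [hb], by simp [hc, hb]⟩
  have hlam := pow_three_eq_one_of_cyclic_fixed ha0 hb hc ha
  have hlam0 : lam ≠ 0 := by rintro rfl; norm_num at hlam
  have hc' : c = lam ^ 2 * a := by rw [hc, hb]; ring
  rw [hc', hb, hurwitz_eval_cyclic_orbit hlam hn3] at hcurve
  have h3 : ((3 : ℕ) : K) = 0 := by
    simpa [hlam0, ha0] using hcurve
  exact hpn <| ((CharP.cast_eq_zero_iff K p 3).mp h3).trans
    (three_dvd_sq_sub_add_one_of_mod_three_eq_two hn3)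

/-- If `n ≡ 2 (mod 3)` and `p ∤ n²-n+1`, the automorphism
`μ : (X:Y:Z) ↦ (Y:Z:X)` of the Hurwitz curve has no fixed points on the curve. -/
theorem hurwitz_mu_no_fixed_points (K : Type*) [Field K]
    (p : ℕ) [CharP K p] (hp : 0 < p)
    (n : ℕ) (hn : 3 ≤ n) (hn3 : n % 3 = 2) (hpn : ¬ p ∣ (n ^ 2 - n + 1))
    (a b c : K) (habc : ¬(a = 0 ∧ b = 0 ∧ c = 0))
    (hcurve : a * b ^ n + b * c ^ n + a ^ n * c = 0) :
    ¬ ∃ lam : K, b = lam * a ∧ c = lam * b ∧ a = lam * c :=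
  hurwitz_mu_no_fixed_points_general K p n hn3 hpn a b c habc hcurve
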